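/- Let L > 0 and 0 < α < 1. For every continuous function ψ : [0,L] → ℂ with finite α-Hölder seminorm, one has ‖ψ‖_∞ ≤ ‖ψ‖_2 / √L + 2 ‖ψ‖_2^{2α/(2α+1)} ‖ψ‖_{Hol,α}^{1/(2α+1)}. -/

import Mathlib

open Real Set

/-!
Hölder continuity gives `‖ψ t‖ ≥ ‖ψ x‖ - C δ ^ α` on any window of length `δ ≤ L` in `[0, L]`
containing `x`, so `δ (‖ψ x‖ - C δ ^ α)² ≤ ‖ψ‖₂²`, i.e. `‖ψ x‖ ≤ ‖ψ‖₂ / √δ + C δ ^ α`.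
Choosing `δ = (‖ψ‖₂ / C) ^ (2 / (2α + 1))`, which balances the two terms, or `δ = L` when that
is too long, gives the bound.
-/

theorem mul_sq_le_intervalIntegral_sq {f : ℝ → ℝ} {a b m : ℝ} (hab : a ≤ b) (hm : 0 ≤ m)
    (hf : IntervalIntegrable (fun t => f t ^ 2) MeasureTheory.volume a b)
    (hle : ∀ t ∈ Icc a b, m ≤ f t) :
    (b - a) * m ^ 2 ≤ ∫ t in a..b, f t ^ 2 := by
  have hconst := intervalIntegral.integral_mono_on hab intervalIntegrable_const hf
    fun t ht => pow_le_pow_left₀ hm (hle t ht) 2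
  simpa using hconst

theorem norm_le_sqrt_integral_sq_div_sqrt_add {E : Type*} [NormedAddCommGroup E] {ψ : ℝ → E}
    {a b C α x : ℝ} (hab : a < b) (hα : 0 ≤ α) (hC : 0 ≤ C) (hψ : ContinuousOn ψ (Icc a b))
    (hx : x ∈ Icc a b) (hHol : ∀ t ∈ Icc a b, ‖ψ x - ψ t‖ ≤ C * |x - t| ^ α) :
    ‖ψ x‖ ≤ √(∫ t in a..b, ‖ψ t‖ ^ 2) / √(b - a) + C * (b - a) ^ α := by
  set m := ‖ψ x‖ - C * (b - a) ^ α
  suffices m ≤ √(∫ t in a..b, ‖ψ t‖ ^ 2) / √(b - a) by linarith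
  rcases le_or_gt m 0 with hm | hm
  · exact hm.trans (by positivity)
  have hlower : ∀ t ∈ Icc a b, m ≤ ‖ψ t‖ := by
    intro t ht
    have hdist : |x - t| ≤ b - a := abs_le.2 ⟨by linarith [hx.1, ht.2], by linarith [hx.2, ht.1]⟩
    calc m = ‖ψ x‖ - C * (b - a) ^ α := rfl
      _ ≤ ‖ψ x‖ - C * |x - t| ^ α := by gcongr
      _ ≤ ‖ψ x‖ - ‖ψ x - ψ t‖ := by linarith [hHol t ht]
      _ ≤ ‖ψ t‖ := by linarith [norm_sub_norm_le (ψ x) (ψ t)]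
  have hsq := mul_sq_le_intervalIntegral_sq hab.le hm.le
    ((hψ.norm.pow 2).intervalIntegrable_of_Icc hab.le) hlower
  rw [le_div_iff₀ (sqrt_pos.2 (sub_pos.2 hab)), le_sqrt (by positivity)
    (intervalIntegral.integral_nonneg hab.le fun t _ => by positivity), mul_pow,
    sq_sqrt (sub_pos.2 hab).le]
  linarith

theorem exists_mem_Icc_add_subset_Icc {p q x δ : ℝ} (hx : x ∈ Icc p q) (hδ : 0 ≤ δ)
    (hδq : δ ≤ q - p) : ∃ a, x ∈ Icc a (a + δ) ∧ Icc a (a + δ) ⊆ Icc p q := by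
  refine ⟨min x (q - δ), ⟨min_le_left _ _, ?_⟩, Icc_subset_Icc ?_ ?_⟩
  · rcases min_choice x (q - δ) with h | h <;> rw [h] <;> linarith [hx.2]
  · exact le_min hx.1 (by linarith)
  · linarith [min_le_right x (q - δ)]

theorem nonpos_of_forall_le_mul_rpow {u C L α : ℝ} (hL : 0 < L) (hα : 0 < α)
    (h : ∀ δ, 0 < δ → δ ≤ L → u ≤ C * δ ^ α) : u ≤ 0 := by
  have hlim : Filter.Tendsto (fun δ : ℝ => C * δ ^ α) (nhdsWithin 0 (Ioi 0)) (nhds 0) := by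
    have := ((continuousAt_rpow_const 0 α (Or.inr hα.le)).const_mul C).tendsto
    simpa [zero_rpow hα.ne'] using this.mono_left nhdsWithin_le_nhds
  exact ge_of_tendsto hlim (Filter.mem_of_superset (Ioo_mem_nhdsGT hL)
    fun δ hδ => h δ hδ.1 hδ.2.le)

-- the window length at which `M / √δ` and `C * δ ^ α` coincide
noncomputable def balancingScale (M C α : ℝ) : ℝ := (M / C) ^ (2 / (2 * α + 1))

theorem div_sqrt_balancingScale {M C α : ℝ} (hM : 0 < M) (hC : 0 < C) (hα : 0 < α) :
    M / √(balancingScale M C α) = M ^ (2 * α / (2 * α + 1)) * C ^ (1 / (2 * α + 1)) := by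
  have hsqrt : √(balancingScale M C α) = M ^ (1 / (2 * α + 1)) / C ^ (1 / (2 * α + 1)) := by
    rw [sqrt_eq_rpow, balancingScale, ← rpow_mul (div_pos hM hC).le,
      div_rpow hM.le hC.le]
    congr 2 <;> field_simp
  have hq : 2 * α / (2 * α + 1) = 1 - 1 / (2 * α + 1) := by field_simp; ring
  rw [hsqrt, hq, rpow_sub hM, rpow_one]
  field_simp

theorem mul_balancingScale_rpow {M C α : ℝ} (hM : 0 < M) (hC : 0 < C) (hα : 0 < α) :
    C * balancingScale M C α ^ α = M ^ (2 * α / (2 * α + 1)) * C ^ (1 / (2 * α + 1)) := by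
  have hpow : balancingScale M C α ^ α
      = M ^ (2 * α / (2 * α + 1)) / C ^ (2 * α / (2 * α + 1)) := by
    rw [balancingScale, ← rpow_mul (div_pos hM hC).le, div_rpow hM.le hC.le]
    congr 2 <;> field_simp
  have hp : 1 / (2 * α + 1) = 1 - 2 * α / (2 * α + 1) := by field_simp; ring
  rw [hpow, hp, rpow_sub hC, rpow_one]
  field_simp

theorem le_div_sqrt_add_two_mul_rpow_of_forall_le {u M C L α : ℝ} (hL : 0 < L) (hα : 0 < α)
    (hM : 0 ≤ M) (hC : 0 ≤ C) (h : ∀ δ, 0 < δ → δ ≤ L → u ≤ M / √δ + C * δ ^ α) :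
    u ≤ M / √L + 2 * M ^ (2 * α / (2 * α + 1)) * C ^ (1 / (2 * α + 1)) := by
  rcases hC.eq_or_lt with rfl | hC
  · rw [zero_rpow (by positivity), mul_zero, add_zero]
    simpa using h L hL le_rfl
  rcases hM.eq_or_lt with rfl | hM
  · rw [zero_div, zero_rpow (by positivity), mul_zero, zero_mul, add_zero]
    exact nonpos_of_forall_le_mul_rpow hL hα fun δ hδ hδL => by simpa using h δ hδ hδL
  have hB : 0 ≤ M ^ (2 * α / (2 * α + 1)) * C ^ (1 / (2 * α + 1)) := by positivity
  have hsqrtL : 0 ≤ M / √L := by positivity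
  rcases le_or_gt (balancingScale M C α) L with hle | hgt
  · calc u ≤ M / √(balancingScale M C α) + C * balancingScale M C α ^ α :=
          h _ (rpow_pos_of_pos (div_pos hM hC) _) hle
      _ = 2 * M ^ (2 * α / (2 * α + 1)) * C ^ (1 / (2 * α + 1)) := by
          rw [div_sqrt_balancingScale hM hC hα, mul_balancingScale_rpow hM hC hα]; ring
      _ ≤ _ := by linarith
  · calc u ≤ M / √L + C * L ^ α := h L hL le_rfl
      _ ≤ M / √L + C * balancingScale M C α ^ α := by gcongr
      _ = M / √L + M ^ (2 * α / (2 * α + 1)) * C ^ (1 / (2 * α + 1)) := by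
          rw [mul_balancingScale_rpow hM hC hα]
      _ ≤ _ := by linarith

theorem supnorm_le_L2_holder_interpolation
    (L α : ℝ) (hL : 0 < L) (hα0 : 0 < α)
    (ψ : ℝ → ℂ) (hψ : ContinuousOn ψ (Set.Icc 0 L))
    (C : ℝ) (hC : 0 ≤ C)
    (hHol : ∀ x ∈ Set.Icc 0 L, ∀ y ∈ Set.Icc 0 L, ‖ψ y - ψ x‖ ≤ C * |y - x| ^ α) :
    ∀ x ∈ Set.Icc 0 L,
      ‖ψ x‖ ≤ Real.sqrt (∫ t in (0:ℝ)..L, ‖ψ t‖ ^ 2) / Real.sqrt L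
        + 2 * (Real.sqrt (∫ t in (0:ℝ)..L, ‖ψ t‖ ^ 2)) ^ (2 * α / (2 * α + 1))
            * C ^ (1 / (2 * α + 1)) := by
  intro x hx
  refine le_div_sqrt_add_two_mul_rpow_of_forall_le hL hα0 (sqrt_nonneg _) hC fun δ hδ hδL => ?_
  obtain ⟨a, hxa, hsub⟩ := exists_mem_Icc_add_subset_Icc hx hδ.le (by simpa using hδL)
  have hlocal := norm_le_sqrt_integral_sq_div_sqrt_add (lt_add_of_pos_right a hδ) hα0.le hC
    (hψ.mono hsub) hxa fun t ht => hHol t (hsub ht) x hx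
  rw [add_sub_cancel_left] at hlocal
  have hwindow : ∫ t in a..a + δ, ‖ψ t‖ ^ 2 ≤ ∫ t in (0:ℝ)..L, ‖ψ t‖ ^ 2 :=
    intervalIntegral.integral_mono_interval (hsub ⟨le_rfl, by linarith⟩).1 (by linarith)
      (hsub ⟨by linarith, le_rfl⟩).2 (Filter.Eventually.of_forall fun t => by positivity)
      ((hψ.norm.pow 2).intervalIntegrable_of_Icc hL.le)
  calc ‖ψ x‖ ≤ √(∫ t in a..a + δ, ‖ψ t‖ ^ 2) / √δ + C * δ ^ α := hlocal
    _ ≤ _ := by gcongr
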